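/- arXiv:1511.03490 — 3 statements merged into one kernel-verified Lean document; each statement's English description precedes it below -/
import Mathlib

section
/- The truncated version of the star/non-star decomposition holds as an identity of finite sums: for any N ≥ 0, Σ_{N ≥ i_r ≥ ⋯ ≥ i_1 ≥ 0} a_1(i_1)⋯a_r(i_r) = Σ_{ℓ=2}^{r} (−1)^ℓ (Σ_{N ≥ i_1 > ⋯ > i_{ℓ−1} ≥ 0} a_1(i_1)⋯a_{ℓ−1}(i_{ℓ−1})) · (Σ_{N ≥ i_r ≥ ⋯ ≥ i_ℓ ≥ 0} a_ℓ(i_ℓ)⋯a_r(i_r)) + (−1)^{r+1} Σ_{N ≥ i_1 > ⋯ > i_r ≥ 0} a_1(i_1)⋯a_r(i_r), for arbitrary functions a_1,…,a_r from {0,…,N} to a commutative ring. -/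
/-! Write `T p q` (`antiMonoSum`) for the sum over tuples `t` that are strictly decreasing on
the coordinates `< p` and weakly increasing on the coordinates `≥ q`. Concatenating a strictly
decreasing tuple of length `m` with a weakly increasing one identifies `strictSum · weakSum` with
`T m m`. According to whether `t (m-1) ≤ t m` or `t m < t (m-1)`, the tuples counted by `T m m`
split into the "V-shaped" ones with minimum at `m - 1` or at `m`, so `T m m = V (m-1) + V m` with
`V v = T (v+1) v`; at the ends `T 0 0 = V 0` and `T r r = V (r-1)`. The alternating sum on the
right-hand side therefore telescopes to `V 0 = T 0 0`, the left-hand side. -/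

open scoped Classical

/-- Sum over strictly decreasing tuples `N ≥ i_1 > ⋯ > i_m ≥ 0` of
`a_off(i_1)⋯a_{off+m-1}(i_m)` (here `j = 0` corresponds to `i_1`). -/
noncomputable def strictSum {R : Type*} [CommRing R] (N m off : ℕ) (a : ℕ → ℕ → R) : R :=
  ∑ i ∈ Finset.univ.filter
      (fun i : Fin m → Fin (N + 1) => ∀ j k : Fin m, j < k → (i k : ℕ) < (i j : ℕ)),
    ∏ j : Fin m, a (off + (j : ℕ)) ((i j : ℕ))

/-- Sum over weakly increasing tuples `0 ≤ i_1 ≤ ⋯ ≤ i_m ≤ N` of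
`a_off(i_1)⋯a_{off+m-1}(i_m)` (here `j = 0` corresponds to `i_1`). -/
noncomputable def weakSum {R : Type*} [CommRing R] (N m off : ℕ) (a : ℕ → ℕ → R) : R :=
  ∑ i ∈ Finset.univ.filter (fun i : Fin m → Fin (N + 1) => Monotone i),
    ∏ j : Fin m, a (off + (j : ℕ)) ((i j : ℕ))

lemma MonotoneOn.insert_of_le {ι α : Type*} [Preorder ι] [Preorder α] {f : ι → α} {s : Set ι}
    {a b : ι} (hf : MonotoneOn f s) (hb : b ∈ s) (hab : a < b) (hbs : ∀ x ∈ s, b ≤ x)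
    (hfab : f a ≤ f b) : MonotoneOn f (insert a s) := by
  rintro x (rfl | hx) y (rfl | hy) hxy
  · exact le_rfl
  · exact hfab.trans (hf hb hy (hbs y hy))
  · exact absurd (hab.trans_le (hbs x hx)) (not_lt_of_ge hxy)
  · exact hf hx hy hxy

lemma StrictAntiOn.insert_of_lt {ι α : Type*} [PartialOrder ι] [Preorder α] {f : ι → α}
    {s : Set ι} {a b : ι} (hf : StrictAntiOn f s) (ha : a ∈ s) (hab : a < b) (hsa : ∀ x ∈ s, x ≤ a)
    (hfab : f b < f a) : StrictAntiOn f (insert b s) := by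
  rintro x (rfl | hx) y (rfl | hy) hxy
  · exact absurd hxy (lt_irrefl _)
  · exact absurd ((hsa y hy).trans_lt hab) (not_lt_of_gt hxy)
  · exact hfab.trans_le (hf.antitoneOn hx ha (hsa x hx))
  · exact hf hx hy hxy

namespace Fin

section Append

variable {α : Type*} [Preorder α] {m u : ℕ} (x : Fin m → α) (y : Fin u → α)

lemma strictAntiOn_append_iff :
    StrictAntiOn (append x y) {k | (k : ℕ) < m} ↔ StrictAnti x := by
  refine ⟨fun h i j hij => ?_, fun h i hi j hj hij => ?_⟩
  · simpa using h (a := castAdd u i) (by simp) (b := castAdd u j) (by simp) hij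
  · obtain ⟨i, rfl⟩ : ∃ i', castAdd u i' = i := ⟨⟨i, hi⟩, rfl⟩
    obtain ⟨j, rfl⟩ : ∃ j', castAdd u j' = j := ⟨⟨j, hj⟩, rfl⟩
    simpa using h hij

lemma monotoneOn_append_iff :
    MonotoneOn (append x y) {k | m ≤ (k : ℕ)} ↔ Monotone y := by
  refine ⟨fun h i j hij => ?_, fun h i hi j hj hij => ?_⟩
  · simpa using h (a := natAdd m i) (by simp) (b := natAdd m j) (by simp) (by simpa using hij)
  · rw [Set.mem_ofPred_eq] at hi hj
    obtain ⟨i, rfl⟩ : ∃ i', natAdd m i' = i := ⟨⟨i - m, by omega⟩,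
      Fin.ext (Nat.add_sub_cancel' hi)⟩
    obtain ⟨j, rfl⟩ : ∃ j', natAdd m j' = j := ⟨⟨j - m, by omega⟩,
      Fin.ext (Nat.add_sub_cancel' hj)⟩
    simpa using h (by simpa using hij)

end Append

lemma subsingleton_setOf_val_lt {r p : ℕ} (hp : p ≤ 1) :
    {k : Fin r | (k : ℕ) < p}.Subsingleton := fun i hi j hj =>
  Fin.ext (by simp only [Set.mem_ofPred_eq] at hi hj; omega)

lemma subsingleton_setOf_le_val {r q : ℕ} (hq : r ≤ q + 1) :
    {k : Fin r | q ≤ (k : ℕ)}.Subsingleton := fun i hi j hj =>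
  Fin.ext (by simp only [Set.mem_ofPred_eq] at hi hj; omega)

section ConsecutiveCoordinates

variable {α : Type*} [Preorder α] {r m : ℕ} (t : Fin r → α) (h : m + 1 < r)
include h

lemma monotoneOn_setOf_le_val_iff :
    MonotoneOn t {k | m ≤ (k : ℕ)} ↔
      MonotoneOn t {k | m + 1 ≤ (k : ℕ)} ∧ t ⟨m, by omega⟩ ≤ t ⟨m + 1, h⟩ := by
  have hset : {k : Fin r | m ≤ (k : ℕ)} =
      insert (⟨m, by omega⟩ : Fin r) {k : Fin r | m + 1 ≤ (k : ℕ)} := by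
    ext k; simp only [Set.mem_ofPred_eq, Set.mem_insert_iff, Fin.ext_iff]; omega
  refine ⟨fun ht => ⟨ht.mono fun k hk => by simp only [Set.mem_ofPred_eq] at hk ⊢; omega,
    ht (by simp) (by simp) (by simp [Fin.le_def])⟩, fun ⟨ht, hle⟩ => ?_⟩
  rw [hset]
  exact ht.insert_of_le (by simp) (by simp [Fin.lt_def])
    (fun k hk => by simpa [Fin.le_def] using hk) hle

lemma strictAntiOn_setOf_val_lt_iff :
    StrictAntiOn t {k | (k : ℕ) < m + 2} ↔
      StrictAntiOn t {k | (k : ℕ) < m + 1} ∧ t ⟨m + 1, h⟩ < t ⟨m, by omega⟩ := by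
  have hset : {k : Fin r | (k : ℕ) < m + 2} =
      insert (⟨m + 1, h⟩ : Fin r) {k : Fin r | (k : ℕ) < m + 1} := by
    ext k; simp only [Set.mem_ofPred_eq, Set.mem_insert_iff, Fin.ext_iff]; omega
  refine ⟨fun ht => ⟨ht.mono fun k hk => by simp only [Set.mem_ofPred_eq] at hk ⊢; omega,
    ht (by simp) (by simp) (by simp [Fin.lt_def])⟩, fun ⟨ht, hlt⟩ => ?_⟩
  rw [hset]
  exact ht.insert_of_lt (by simp) (by simp [Fin.lt_def])
    (fun k hk => by simpa [Fin.le_def] using hk) hlt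

end ConsecutiveCoordinates

end Fin

noncomputable def antiMonoSum {R : Type*} [CommRing R] (N r p q off : ℕ) (a : ℕ → ℕ → R) : R :=
  ∑ t ∈ Finset.univ.filter (fun t : Fin r → Fin (N + 1) =>
      StrictAntiOn t {k | (k : ℕ) < p} ∧ MonotoneOn t {k | q ≤ (k : ℕ)}),
    ∏ j : Fin r, a (off + (j : ℕ)) ((t j : ℕ))

section antiMonoSum

variable {R : Type*} [CommRing R] (N : ℕ) {r : ℕ} (off : ℕ) (a : ℕ → ℕ → R)

lemma strictSum_zero : strictSum N 0 off a = 1 := by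
  simp [strictSum]

lemma weakSum_zero : weakSum N 0 off a = 1 := by
  simp [weakSum, Subsingleton.monotone]

lemma strictSum_mul_weakSum (m u : ℕ) :
    strictSum N m off a * weakSum N u (off + m) a = antiMonoSum N (m + u) m m off a := by
  rw [strictSum, weakSum, Finset.sum_mul_sum, ← Finset.sum_product']
  refine Finset.sum_equiv (Fin.appendEquiv m u) (fun p => ?_) (fun p _ => ?_)
  · simp only [Finset.mem_product, Finset.mem_filter, Finset.mem_univ, true_and]
    exact and_congr (Fin.strictAntiOn_append_iff p.1 p.2).symm
      (Fin.monotoneOn_append_iff p.1 p.2).symm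
  · simp [Fin.prod_univ_add, add_assoc]

lemma antiMonoSum_congr {p q p' q' : ℕ}
    (h : ∀ t : Fin r → Fin (N + 1),
      StrictAntiOn t {k | (k : ℕ) < p} ∧ MonotoneOn t {k | q ≤ (k : ℕ)} ↔
        StrictAntiOn t {k | (k : ℕ) < p'} ∧ MonotoneOn t {k | q' ≤ (k : ℕ)}) :
    antiMonoSum N r p q off a = antiMonoSum N r p' q' off a := by
  rw [antiMonoSum, antiMonoSum, Finset.filter_congr fun t _ => h t]

lemma antiMonoSum_zero_zero : antiMonoSum N r 0 0 off a = antiMonoSum N r 1 0 off a :=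
  antiMonoSum_congr N off a fun _ => and_congr_left fun _ =>
    iff_of_true ((Fin.subsingleton_setOf_val_lt (p := 0) zero_le_one).strictAntiOn _)
      ((Fin.subsingleton_setOf_val_lt le_rfl).strictAntiOn _)

lemma antiMonoSum_succ_succ (s : ℕ) :
    antiMonoSum N (s + 1) (s + 1) (s + 1) off a = antiMonoSum N (s + 1) (s + 1) s off a :=
  antiMonoSum_congr N off a fun _ => and_congr_right fun _ =>
    iff_of_true ((Fin.subsingleton_setOf_le_val (q := s + 1) (by omega)).monotoneOn _)
      ((Fin.subsingleton_setOf_le_val le_rfl).monotoneOn _)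

lemma antiMonoSum_split {m : ℕ} (h : m + 1 < r) :
    antiMonoSum N r (m + 1) (m + 1) off a =
      antiMonoSum N r (m + 1) m off a + antiMonoSum N r (m + 2) (m + 1) off a := by
  rw [antiMonoSum, antiMonoSum, antiMonoSum, ← Finset.sum_union, ← Finset.filter_or]
  · refine Finset.sum_congr (Finset.filter_congr fun t _ => ?_) fun _ _ => rfl
    rw [Fin.monotoneOn_setOf_le_val_iff t h, Fin.strictAntiOn_setOf_val_lt_iff t h]
    rcases le_or_gt (t ⟨m, by omega⟩) (t ⟨m + 1, h⟩) with hle | hlt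
    · simp [hle, not_lt_of_ge hle]
    · simp [hlt, not_le_of_gt hlt]
  · refine Finset.disjoint_filter.2 fun t _ ht ht' => ?_
    rw [Fin.monotoneOn_setOf_le_val_iff t h] at ht
    rw [Fin.strictAntiOn_setOf_val_lt_iff t h] at ht'
    exact not_lt_of_ge ht.2.2 ht'.1.2

end antiMonoSum

/-- the truncated star/non-star decomposition: for any `N ≥ 0`,
`Σ_{N ≥ i_r ≥ ⋯ ≥ i_1 ≥ 0} a_1(i_1)⋯a_r(i_r)
 = Σ_{ℓ=2}^r (−1)^ℓ (Σ_{N ≥ i_1 > ⋯ > i_{ℓ−1} ≥ 0} a_1(i_1)⋯a_{ℓ−1}(i_{ℓ−1}))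
     ·(Σ_{N ≥ i_r ≥ ⋯ ≥ i_ℓ ≥ 0} a_ℓ(i_ℓ)⋯a_r(i_r))
   + (−1)^{r+1} Σ_{N ≥ i_1 > ⋯ > i_r ≥ 0} a_1(i_1)⋯a_r(i_r)`. -/
theorem stmt5 {R : Type*} [CommRing R] (N r : ℕ) (hr : 1 ≤ r) (a : ℕ → ℕ → R) :
    weakSum N r 1 a =
      ∑ ℓ ∈ Finset.Icc 2 r, (-1 : R) ^ ℓ * strictSum N (ℓ - 1) 1 a * weakSum N (r - ℓ + 1) ℓ a
        + (-1 : R) ^ (r + 1) * strictSum N r 1 a := by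
  obtain ⟨s, rfl⟩ : ∃ s, r = s + 1 := ⟨r - 1, by omega⟩
  have first : weakSum N (s + 1) 1 a = antiMonoSum N (s + 1) 1 0 1 a := by
    have h := strictSum_mul_weakSum N 1 a 0 (s + 1)
    rwa [strictSum_zero, one_mul, add_zero, zero_add, antiMonoSum_zero_zero] at h
  have last : strictSum N (s + 1) 1 a = antiMonoSum N (s + 1) (s + 1) s 1 a := by
    rw [← antiMonoSum_succ_succ, ← strictSum_mul_weakSum N 1 a (s + 1) 0, weakSum_zero, mul_one]
  have middle : ∀ i ∈ Finset.range s,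
      (-1 : R) ^ (2 + i) * strictSum N (2 + i - 1) 1 a * weakSum N (s + 1 - (2 + i) + 1) (2 + i) a
        = (-1) ^ i * antiMonoSum N (s + 1) (i + 1) i 1 a
          - (-1) ^ (i + 1) * antiMonoSum N (s + 1) (i + 1 + 1) (i + 1) 1 a := by
    intro i hi
    rw [Finset.mem_range] at hi
    rw [show 2 + i - 1 = i + 1 by omega, show s + 1 - (2 + i) + 1 = s - i by omega,
      show 2 + i = 1 + (i + 1) by omega, mul_assoc, strictSum_mul_weakSum,
      show i + 1 + (s - i) = s + 1 by omega, antiMonoSum_split N 1 a (by omega)]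
    ring
  rw [first, last, ← Finset.Ico_add_one_right_eq_Icc, Finset.sum_Ico_eq_sum_range,
    show s + 1 + 1 - 2 = s by omega, Finset.sum_congr rfl middle,
    Finset.sum_range_sub' (fun i => (-1 : R) ^ i * antiMonoSum N (s + 1) (i + 1) i 1 a)]
  ring
end

section
/- Fix ℓ < m, positive integers s_ℓ,…,s_{m−1}, d_n = s_n + ⋯ + s_r for ℓ ≤ n ≤ m, and elements u_ℓ,…,u_{m−1} of a field K of characteristic p containing F_q(θ). Define y_i[ℓ n] for ℓ ≤ n ≤ m by y_i[ℓ ℓ] = 1/L_i^{d_ℓ}, y_0[ℓ n] = 0 for n > ℓ, and the recursion L_{i+1}^{d_m} y_{i+1}[ℓ m] = L_i^{d_m} Σ_{n=ℓ}^{m−1} y_i[ℓ n] (−1)^{m−n} ∏_{e=n}^{m−1} u_e^{q^i} + L_i^{d_m} y_i[ℓ m]. Then y_i[ℓ m] = (−1)^{m−ℓ} Σ_{0 ≤ i_ℓ ≤ ⋯ ≤ i_{m−1} < i} u_ℓ^{q^{i_ℓ}} ⋯ u_{m−1}^{q^{i_{m−1}}} / (L_{i_ℓ}^{s_ℓ}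 ⋯ L_{i_{m−1}}^{s_{m−1}} L_i^{d_m}) for all i ≥ 0. -/
/-!
Put `x_i(c) = (-1)^c L_i^{d_{ℓ+c}} y_i[ℓ, ℓ+c]` and `g_j(i) = u_{ℓ+j}^{q^i} / L_i^{s_{ℓ+j}}`.
Since `d_{ℓ+t} = s_{ℓ+t} + ⋯ + s_{ℓ+c-1} + d_{ℓ+c}`, the recursion for `y` becomes
`x_{i+1}(c) = Σ_{t ≤ c} x_i(t) ∏_{t ≤ j < c} g_j(i)`, with `x_i(0) = 1` and `x_0(c) = 0` for `c > 0`.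
The sum `T_c(i)` of `∏_j g_j(f_j)` over monotone `f : Fin c → Fin i` obeys the same recursion:
splitting by whether the last value `f_c` equals `i` gives `T_{c+1}(i+1) = T_c(i+1) g_c(i) + T_{c+1}(i)`,
and iterating this in `c` gives the sum.
-/

open Finset

section MonotoneSum

variable {R : Type*} [CommSemiring R] (g : ℕ → ℕ → R)

noncomputable def monotoneSum (c i : ℕ) : R :=
  ∑ f ∈ univ.filter (fun f : Fin c → Fin i => Monotone f), ∏ j : Fin c, g j (f j)

@[simp]
theorem monotoneSum_zero_left (i : ℕ) : monotoneSum g 0 i = 1 := by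
  simp [monotoneSum, Subsingleton.monotone]

theorem monotoneSum_zero_right {c : ℕ} (hc : c ≠ 0) : monotoneSum g c 0 = 0 := by
  have : IsEmpty (Fin c → Fin 0) := ⟨fun f => (f ⟨0, Nat.pos_of_ne_zero hc⟩).elim0⟩
  simp [monotoneSum, univ_eq_empty]

theorem Fin.monotone_snoc_last {c i : ℕ} {h : Fin c → Fin (i + 1)} (hh : Monotone h) :
    Monotone (Fin.snoc h (Fin.last i) : Fin (c + 1) → Fin (i + 1)) := by
  intro a b hab
  rcases Fin.eq_castSucc_or_eq_last b with ⟨b', rfl⟩ | rfl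
  · rcases Fin.eq_castSucc_or_eq_last a with ⟨a', rfl⟩ | rfl
    · simpa [Fin.snoc_castSucc] using hh (Fin.castSucc_le_castSucc_iff.mp hab)
    · rw [le_antisymm (Fin.le_last _) hab]
  · simp [Fin.snoc_last, Fin.le_last]

theorem sum_filter_monotone_last_eq (c i : ℕ) :
    ∑ f ∈ univ.filter (fun f : Fin (c + 1) → Fin (i + 1) => Monotone f ∧ f (Fin.last c) = Fin.last i),
      ∏ j : Fin (c + 1), g j (f j) = monotoneSum g c (i + 1) * g c i := by
  rw [monotoneSum, sum_mul]
  refine sum_bij' (fun f _ => Fin.init f) (fun h _ => Fin.snoc h (Fin.last i)) ?_ ?_ ?_ ?_ ?_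
  · simp only [mem_filter, mem_univ, true_and]
    exact fun f hf a b hab => hf.1 (Fin.castSucc_le_castSucc_iff.mpr hab)
  · simp only [mem_filter, mem_univ, true_and]
    exact fun h hh => ⟨Fin.monotone_snoc_last hh, Fin.snoc_last _ _⟩
  · simp only [mem_filter, mem_univ, true_and]
    intro f hf
    conv_rhs => rw [← Fin.snoc_init_self f, hf.2]
  · exact fun h _ => Fin.init_snoc _ _
  · simp only [mem_filter, mem_univ, true_and]
    intro f hf
    simp [Fin.prod_univ_castSucc, Fin.init, hf.2]

theorem sum_filter_monotone_last_ne (c i : ℕ) :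
    ∑ f ∈ univ.filter (fun f : Fin (c + 1) → Fin (i + 1) => Monotone f ∧ f (Fin.last c) ≠ Fin.last i),
      ∏ j : Fin (c + 1), g j (f j) = monotoneSum g (c + 1) i := by
  rw [monotoneSum]
  refine sum_bij' (fun f hf j => (f j).castPred ?_) (fun h _ j => (h j).castSucc) ?_ ?_ ?_ ?_ ?_
  · simp only [mem_filter, mem_univ, true_and] at hf
    exact fun h => hf.2 (le_antisymm (Fin.le_last _) (h ▸ hf.1 (Fin.le_last j)))
  · simp only [mem_filter, mem_univ, true_and]
    exact fun f hf a b hab => Fin.castPred_le_castPred_iff.mpr (hf.1 hab)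
  · simp only [mem_filter, mem_univ, true_and]
    exact fun h hh => ⟨fun a b hab => Fin.castSucc_le_castSucc_iff.mpr (hh hab),
      (Fin.castSucc_lt_last _).ne⟩
  all_goals simp

theorem monotoneSum_succ_succ (c i : ℕ) :
    monotoneSum g (c + 1) (i + 1) = monotoneSum g c (i + 1) * g c i + monotoneSum g (c + 1) i := by
  rw [monotoneSum, ← sum_filter_add_sum_filter_not _ (fun f => f (Fin.last c) = Fin.last i),
    filter_filter, filter_filter, sum_filter_monotone_last_eq, sum_filter_monotone_last_ne]

theorem monotoneSum_succ_right (c i : ℕ) :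
    monotoneSum g c (i + 1) = ∑ t ∈ range (c + 1), monotoneSum g t i * ∏ j ∈ Ico t c, g j i := by
  induction c with
  | zero => simp
  | succ c ih =>
    rw [monotoneSum_succ_succ, ih, sum_range_succ _ (c + 1), sum_mul]
    congr 1
    · refine sum_congr rfl fun t ht => ?_
      rw [prod_Ico_succ_top (by simpa [Nat.lt_succ_iff] using ht), mul_assoc]
    · simp

theorem eq_monotoneSum_of_succ {N : ℕ} {x : ℕ → ℕ → R} (h_zero : ∀ i, x i 0 = 1)
    (h_init : ∀ c, c ≠ 0 → c ≤ N → x 0 c = 0)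
    (h_succ : ∀ c, c ≠ 0 → c ≤ N → ∀ i,
      x (i + 1) c = ∑ t ∈ range (c + 1), x i t * ∏ j ∈ Ico t c, g j i) :
    ∀ i, ∀ c ≤ N, x i c = monotoneSum g c i := by
  intro i
  induction i with
  | zero =>
    intro c hc
    rcases eq_or_ne c 0 with rfl | hc0
    · simp [h_zero]
    · rw [h_init c hc0 hc, monotoneSum_zero_right g hc0]
  | succ i ih =>
    intro c hc
    rcases eq_or_ne c 0 with rfl | hc0
    · simp [h_zero]
    · rw [h_succ c hc0 hc, monotoneSum_succ_right]
      exact sum_congr rfl fun t ht => by rw [ih t ((mem_range_succ_iff.mp ht).trans hc)]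

end MonotoneSum

theorem Finset.sum_Icc_eq_sum_Ico_add_sum_Icc {M : Type*} [AddCommMonoid M] (f : ℕ → M)
    {k n r : ℕ} (hkn : k ≤ n) (hnr : n ≤ r + 1) :
    ∑ e ∈ Icc k r, f e = ∑ e ∈ Ico k n, f e + ∑ e ∈ Icc n r, f e := by
  rw [← Ico_add_one_right_eq_Icc, ← Ico_add_one_right_eq_Icc, sum_Ico_consecutive f hkn hnr]

section LogarithmCorner

variable {K : Type*} [Field K] (q : ℕ) (L : ℕ → K) (s d : ℕ → ℕ) (u : ℕ → K)
  (y : ℕ → ℕ → K) (ℓ : ℕ)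

noncomputable def normalizedEntry (i c : ℕ) : K := (-1) ^ c * L i ^ d (ℓ + c) * y i (ℓ + c)

noncomputable def stepWeight (j i : ℕ) : K := u (ℓ + j) ^ q ^ i * (L i ^ s (ℓ + j))⁻¹

variable {q L s d u y ℓ}

theorem normalizedEntry_succ (hL : ∀ i, L i ≠ 0) {c i : ℕ}
    (hd : ∀ t ≤ c, d (ℓ + t) = ∑ e ∈ Ico (ℓ + t) (ℓ + c), s e + d (ℓ + c))
    (hy : L (i + 1) ^ d (ℓ + c) * y (i + 1) (ℓ + c) =
      L i ^ d (ℓ + c) * (∑ k ∈ Ico ℓ (ℓ + c),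
          y i k * (-1 : K) ^ (ℓ + c - k) * ∏ e ∈ Ico k (ℓ + c), u e ^ q ^ i)
        + L i ^ d (ℓ + c) * y i (ℓ + c)) :
    normalizedEntry L d y ℓ (i + 1) c =
      ∑ t ∈ range (c + 1), normalizedEntry L d y ℓ i t * ∏ j ∈ Ico t c, stepWeight q L s u ℓ j i := by
  have hterm : ∀ t ∈ range c,
      (-1) ^ c * (L i ^ d (ℓ + c) *
        (y i (ℓ + t) * (-1 : K) ^ (c - t) * ∏ e ∈ Ico (ℓ + t) (ℓ + c), u e ^ q ^ i)) =
      normalizedEntry L d y ℓ i t * ∏ j ∈ Ico t c, stepWeight q L s u ℓ j i := by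
    intro t ht
    have htc : t ≤ c := (mem_range.mp ht).le
    have hsign : (-1 : K) ^ c * (-1) ^ (c - t) = (-1) ^ t := by
      rw [← Nat.add_sub_cancel' htc, pow_add, Nat.add_sub_cancel_left, mul_assoc,
        ← mul_pow, neg_one_mul, neg_neg, one_pow, mul_one]
    have hu : ∏ e ∈ Ico (ℓ + t) (ℓ + c), u e ^ q ^ i = ∏ j ∈ Ico t c, u (ℓ + j) ^ q ^ i := by
      rw [prod_Ico_add (fun e => u e ^ q ^ i), add_comm t, add_comm c]
    have hs : ∑ e ∈ Ico (ℓ + t) (ℓ + c), s e = ∑ j ∈ Ico t c, s (ℓ + j) := by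
      rw [sum_Ico_add s, add_comm t, add_comm c]
    simp only [normalizedEntry, stepWeight, prod_mul_distrib, prod_inv_distrib, hu, hd t htc, hs,
      pow_add, prod_pow_eq_pow_sum]
    have hLi := hL i
    rw [← hsign]
    field_simp
  rw [normalizedEntry, mul_assoc, hy, sum_range_succ, sum_Ico_eq_sum_range, ← sum_congr rfl hterm]
  simp only [Nat.add_sub_cancel_left, Nat.add_sub_add_left, Ico_self, prod_empty, mul_one,
    normalizedEntry, mul_add, mul_sum]
  ring

end LogarithmCorner

theorem stmt9_general {K : Type*} [Field K] (q : ℕ)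
    (L : ℕ → K) (hL : ∀ i, L i ≠ 0)
    (r ℓ m : ℕ) (hlm : ℓ < m) (hmr : m ≤ r)
    (s : ℕ → ℕ) (d : ℕ → ℕ)
    (hd : ∀ n, d n = ∑ e ∈ Finset.Icc n r, s e)
    (u : ℕ → K)
    (y : ℕ → ℕ → K)
    (hdiag : ∀ i, y i ℓ = (L i ^ d ℓ)⁻¹)
    (hy0 : ∀ n, ℓ < n → n ≤ m → y 0 n = 0)
    (hyrec : ∀ n, ℓ < n → n ≤ m → ∀ i,
      L (i + 1) ^ d n * y (i + 1) n =
        L i ^ d n * (∑ k ∈ Finset.Ico ℓ n,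
            y i k * (-1 : K) ^ (n - k) * ∏ e ∈ Finset.Ico k n, u e ^ q ^ i)
          + L i ^ d n * y i n) :
    ∀ i, y i m = (-1 : K) ^ (m - ℓ) *
      (∑ f ∈ Finset.univ.filter (fun f : Fin (m - ℓ) → Fin i => Monotone f),
        ∏ j : Fin (m - ℓ),
          u (ℓ + (j : ℕ)) ^ q ^ ((f j : ℕ)) * (L ((f j : ℕ)) ^ s (ℓ + (j : ℕ)))⁻¹) *
      (L i ^ d m)⁻¹ := by
  intro i
  have hd_split (t c : ℕ) (htc : t ≤ c) (hc : ℓ + c ≤ m) :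
      d (ℓ + t) = ∑ e ∈ Ico (ℓ + t) (ℓ + c), s e + d (ℓ + c) := by
    rw [hd, hd]
    exact sum_Icc_eq_sum_Ico_add_sum_Icc s (by omega) (by omega)
  have h := eq_monotoneSum_of_succ (stepWeight q L s u ℓ) (x := normalizedEntry L d y ℓ)
    (fun i => by simp [normalizedEntry, hdiag, hL])
    (fun c hc hcm => by simp [normalizedEntry, hy0 (ℓ + c) (by omega) (by omega)])
    (fun c hc hcm i => normalizedEntry_succ hL (fun t ht => hd_split t c ht (by omega))
      (hyrec (ℓ + c) (by omega) (by omega) i))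
    i (m - ℓ) le_rfl
  rw [normalizedEntry, Nat.add_sub_cancel' hlm.le] at h
  change y i m = (-1) ^ (m - ℓ) * monotoneSum (stepWeight q L s u ℓ) (m - ℓ) i * (L i ^ d m)⁻¹
  rw [← h]
  have := hL i
  field_simp
  rw [pow_right_comm, neg_one_sq, one_pow, mul_one]

/-- explicit solution of the recursion for the lower-right-corner entries
`y_i[ℓ m]` of the blocks of the logarithm coefficients of the `t`-module `G`:
`y_i[ℓ m] = (−1)^(m−ℓ) Σ_{0 ≤ i_ℓ ≤ ⋯ ≤ i_{m−1} < i}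
  u_ℓ^{q^{i_ℓ}} ⋯ u_{m−1}^{q^{i_{m−1}}} / (L_{i_ℓ}^{s_ℓ} ⋯ L_{i_{m−1}}^{s_{m−1}} L_i^{d_m})`. -/
theorem stmt9 {K : Type*} [Field K] (p q : ℕ) (hp : p.Prime) [CharP K p]
    (hq : ∃ e : ℕ, 0 < e ∧ q = p ^ e)
    (th : K) (L : ℕ → K) (hL0 : L 0 = 1)
    (hLrec : ∀ i, L (i + 1) = (th - th ^ q ^ (i + 1)) * L i) (hL : ∀ i, L i ≠ 0)
    (r ℓ m : ℕ) (hlm : ℓ < m) (hmr : m ≤ r)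
    (s : ℕ → ℕ) (hs : ∀ n, 0 < s n) (d : ℕ → ℕ)
    (hd : ∀ n, d n = ∑ e ∈ Finset.Icc n r, s e)
    (u : ℕ → K)
    (y : ℕ → ℕ → K)
    (hdiag : ∀ i, y i ℓ = (L i ^ d ℓ)⁻¹)
    (hy0 : ∀ n, ℓ < n → n ≤ m → y 0 n = 0)
    (hyrec : ∀ n, ℓ < n → n ≤ m → ∀ i,
      L (i + 1) ^ d n * y (i + 1) n =
        L i ^ d n * (∑ k ∈ Finset.Ico ℓ n,
            y i k * (-1 : K) ^ (n - k) * ∏ e ∈ Finset.Ico k n, u e ^ q ^ i)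
          + L i ^ d n * y i n) :
    ∀ i, y i m = (-1 : K) ^ (m - ℓ) *
      (∑ f ∈ Finset.univ.filter (fun f : Fin (m - ℓ) → Fin i => Monotone f),
        ∏ j : Fin (m - ℓ),
          u (ℓ + (j : ℕ)) ^ q ^ ((f j : ℕ)) * (L ((f j : ℕ)) ^ s (ℓ + (j : ℕ)))⁻¹) *
      (L i ^ d m)⁻¹ :=
  stmt9_general q L hL r ℓ m hlm hmr s d hd u y hdiag hy0 hyrec
end

section
/- Assume the identity Li*_{(s_r,…,s_1)}(u_r,…,u_1) = Σ_{ℓ=2}^{r} (−1)^ℓ Li_{(s_1,…,s_{ℓ−1})}(u_1,…,u_{ℓ−1})·Li*_{(s_r,…,s_ℓ)}(u_r,…,u_ℓ) + (−1)^{r+1} Li_{(s_1,…,s_r)}(u_1,…,u_r) holds for all r' ≤ r (for the corresponding truncated tuples). Then the simultaneous vanishing Li_{(s_ℓ,…,s_r)}(u_ℓ,…,u_r) = 0 for all 1 ≤ ℓ ≤ r is equivalent to the simultaneous vanishing Li*_{(s_r,…,s_ℓ)}(u_r,…,u_ℓ) = 0 for all 1 ≤ ℓ ≤ r. -/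
/-! The decomposition is unitriangular: `LiS a r` equals `± Li a r` plus a combination of the
`LiS m r` with `a < m ≤ r`. Once all those later `LiS m r` vanish, `LiS a r = 0 ↔ Li a r = 0`.
Downward induction on `a` gives one direction; the other is immediate. -/

theorem eq_zero_iff_of_eq_sum_add_neg_one_pow_mul {R ι : Type*} [CommRing R] {s : Finset ι}
    {c z : ι → R} {x y : R} {n : ℕ} (h : y = ∑ i ∈ s, c i * z i + (-1) ^ n * x)
    (hz : ∀ i ∈ s, z i = 0) : y = 0 ↔ x = 0 := by
  rw [h, Finset.sum_eq_zero fun i hi => by rw [hz i hi, mul_zero], zero_add]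
  exact ((isUnit_neg_one (α := R)).pow n).mul_right_eq_zero

theorem stmt17_general {R : Type*} [CommRing R] (r : ℕ)
    (Li LiS : ℕ → ℕ → R)
    (hdec : ∀ a, 1 ≤ a → a ≤ r →
      LiS a r = ∑ m ∈ Finset.Icc (a + 1) r, (-1 : R) ^ (m - a + 1) * Li a (m - 1) * LiS m r
        + (-1 : R) ^ (r - a) * Li a r) :
    (∀ ℓ, 1 ≤ ℓ → ℓ ≤ r → Li ℓ r = 0) ↔ (∀ ℓ, 1 ≤ ℓ → ℓ ≤ r → LiS ℓ r = 0) := by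
  have eq_zero_iff_of_later : ∀ a, 1 ≤ a → a ≤ r → (∀ m, a < m → m ≤ r → LiS m r = 0) →
      (LiS a r = 0 ↔ Li a r = 0) := fun a ha har hlater =>
    eq_zero_iff_of_eq_sum_add_neg_one_pow_mul (hdec a ha har) fun m hm => by
      rw [Finset.mem_Icc] at hm
      exact hlater m (by omega) hm.2
  constructor
  · intro hLi ℓ
    induction ℓ using Nat.strong_decreasing_induction with
    | base => exact ⟨r, fun m hrm _ hmr => absurd hmr (by omega)⟩
    | step k ih =>
      intro hk hkr
      exact (eq_zero_iff_of_later k hk hkr fun m hkm hmr => ih m hkm (by omega) hmr).2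
        (hLi k hk hkr)
  · intro hLiS ℓ hℓ hℓr
    exact (eq_zero_iff_of_later ℓ hℓ hℓr fun m hℓm hmr => hLiS m (by omega) hmr).1 (hLiS ℓ hℓ hℓr)

/-- assuming the star/non-star decomposition for every suffix tuple
(`Li a b` stands for `Li_{(s_a,…,s_b)}(u_a,…,u_b)` and `LiS a b` for
`Li*_{(s_b,…,s_a)}(u_b,…,u_a)`), the simultaneous vanishing of the
`Li ℓ r` for `1 ≤ ℓ ≤ r` is equivalent to the simultaneous vanishing of the
`LiS ℓ r` for `1 ≤ ℓ ≤ r`. -/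
theorem stmt17 {R : Type*} [CommRing R] (r : ℕ) (hr : 1 ≤ r)
    (Li LiS : ℕ → ℕ → R)
    (hdec : ∀ a, 1 ≤ a → a ≤ r →
      LiS a r = ∑ m ∈ Finset.Icc (a + 1) r, (-1 : R) ^ (m - a + 1) * Li a (m - 1) * LiS m r
        + (-1 : R) ^ (r - a) * Li a r) :
    (∀ ℓ, 1 ≤ ℓ → ℓ ≤ r → Li ℓ r = 0) ↔ (∀ ℓ, 1 ≤ ℓ → ℓ ≤ r → LiS ℓ r = 0) :=
  stmt17_general r Li LiS hdec
end
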